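/- For every λ ∈ ℂ with (√5-1)/2 < |λ| < 2/3 and 0 < arg(λ) < 5π/32, we have 1 - |λ|² > |1 - λ|. -/

import Mathlib

open Real Complex

/-
Writing `r = |λ|`, the claim `|1 - λ|² < (1 - r²)²` expands to `3r² - r⁴ < 2 Re λ = 2r cos(arg λ)`.
For `r < 2/3` the left side divided by `r` is below `7/4`, while `|arg λ| < 5π/32 < 1/2` gives
`cos(arg λ) > 1 - 1/8 = 7/8`.
-/

lemma Complex.sq_norm_one_sub (z : ℂ) : ‖1 - z‖ ^ 2 = 1 - 2 * z.re + ‖z‖ ^ 2 := by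
  simp only [Complex.sq_norm, Complex.normSq_apply, Complex.sub_re, Complex.sub_im,
    Complex.one_re, Complex.one_im]
  ring

lemma Complex.norm_one_sub_lt_one_sub_sq_norm {z : ℂ} (hz : ‖z‖ < 1)
    (h : 3 * ‖z‖ ^ 2 - ‖z‖ ^ 4 < 2 * z.re) : ‖1 - z‖ < 1 - ‖z‖ ^ 2 := by
  have hpos : 0 < 1 - ‖z‖ ^ 2 := by nlinarith [norm_nonneg z]
  refine lt_of_pow_lt_pow_left₀ 2 hpos.le ?_
  rw [Complex.sq_norm_one_sub]
  nlinarith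

lemma Real.seven_eighths_lt_cos {x : ℝ} (hx : |x| < 1 / 2) : 7 / 8 < cos x := by
  have hsq : x ^ 2 < 1 / 4 := by nlinarith [sq_abs x, abs_nonneg x]
  linarith [one_sub_sq_div_two_le_cos (x := x)]

lemma three_mul_sub_pow_three_lt {r : ℝ} (hr₀ : 0 ≤ r) (hr : r < 2 / 3) :
    3 * r - r ^ 3 < 7 / 4 := by
  nlinarith [mul_nonneg (mul_nonneg hr₀ hr₀) (sub_pos.2 hr).le, mul_nonneg hr₀ (sub_pos.2 hr).le]

theorem stmt_8_general (lam : ℂ)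
    (h2 : ‖lam‖ < 2 / 3)
    (h3 : 0 < lam.arg) (h4 : lam.arg < 5 * Real.pi / 32) :
    1 - (‖lam‖) ^ 2 > ‖(1 - lam)‖ := by
  have hr₀ : 0 < ‖lam‖ := norm_pos_iff.mpr fun h ↦ by simp [h] at h3
  have hcos : 7 / 8 < Real.cos lam.arg := by
    refine Real.seven_eighths_lt_cos ?_
    rw [abs_of_pos h3]
    linarith [Real.pi_lt_d2]
  have hcubic := three_mul_sub_pow_three_lt hr₀.le h2
  refine Complex.norm_one_sub_lt_one_sub_sq_norm (by linarith) ?_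
  rw [← Complex.norm_mul_cos_arg lam]
  nlinarith

theorem stmt_8 (lam : ℂ)
    (h1 : (Real.sqrt 5 - 1) / 2 < ‖lam‖)
    (h2 : ‖lam‖ < 2 / 3)
    (h3 : 0 < lam.arg) (h4 : lam.arg < 5 * Real.pi / 32) :
    1 - (‖lam‖) ^ 2 > ‖(1 - lam)‖ :=
  stmt_8_general lam h2 h3 h4
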